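/- Define the extended Motzkin triangle T'(n,k) for n ≥ 0 and integer k by T'(n,k) = T(n,k) for k ≤ n, T'(n,n+1) = 0, T'(n,k) = -T(n, 2n+2-k) for n+2 ≤ k ≤ 2n+2, and T'(n,k) = 0 for k < 0 or k > 2n+2. Then T' satisfies the same recurrence as T: for all n ≥ 1 and all integers k with 0 ≤ k ≤ 2n+2, T'(n,k) = T'(n-1, k-2) + T'(n-1, k-1) + T'(n-1, k). -/
import Mathlib


/-- The Motzkin triangle: T(n,0) = 1, T(n,k) = 0 for k < 0 or k > n,
and T(n,k) = T(n-1,k-2) + T(n-1,k-1) + T(n-1,k) otherwise. -/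
def motzkinT : ℕ → ℤ → ℤ
  | 0, k => if k = 0 then 1 else 0
  | n + 1, k =>
    if k < 0 ∨ ((n : ℤ) + 1) < k then 0
    else if k = 0 then 1
    else motzkinT n (k - 2) + motzkinT n (k - 1) + motzkinT n k

/-- The extended Motzkin triangle: T'(n,k) = T(n,k) for 0 ≤ k ≤ n, 0 at k = n+1,
-T(n, 2n+2-k) for n+2 ≤ k ≤ 2n+2, and 0 for k < 0 or k > 2n+2. -/
def motzkinT' (n : ℕ) (k : ℤ) : ℤ :=
  if k < 0 then 0
  else if k ≤ (n : ℤ) then motzkinT n k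
  else if k = (n : ℤ) + 1 then 0
  else if k ≤ 2 * (n : ℤ) + 2 then -motzkinT n (2 * (n : ℤ) + 2 - k)
  else 0

lemma motzkinT_neg (n : ℕ) (k : ℤ) (h : k < 0) : motzkinT n k = 0 := by
  cases n with
  | zero => simp [motzkinT]; omega
  | succ m => simp [motzkinT]; omega

lemma motzkinT_gt (n : ℕ) (k : ℤ) (h : (n : ℤ) < k) : motzkinT n k = 0 := by
  cases n with
  | zero => simp [motzkinT]; omega
  | succ m => simp only [motzkinT]; rw [if_pos]; push_cast at h ⊢; omega

lemma motzkinT_zero (n : ℕ) : motzkinT n 0 = 1 := by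
  cases n with
  | zero => simp [motzkinT]
  | succ m => simp [motzkinT]; positivity

lemma motzkinT_rec (m : ℕ) (k : ℤ) (h0 : 0 ≤ k) (h1 : k ≤ (m : ℤ) + 1) :
    motzkinT (m + 1) k = motzkinT m (k - 2) + motzkinT m (k - 1) + motzkinT m k := by
  rcases eq_or_lt_of_le h0 with h | h
  · rw [← h]
    simp [motzkinT_neg m _ (by omega : (-2:ℤ) < 0), motzkinT_neg m _ (by omega : (-1:ℤ) < 0),
      motzkinT_zero, motzkinT]
    positivity
  · simp only [motzkinT]
    rw [if_neg (by omega), if_neg (by omega)]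

lemma motzkinT'_eq (n : ℕ) (k : ℤ) :
    motzkinT' n k = motzkinT n k - motzkinT n (2 * (n : ℤ) + 2 - k) := by
  unfold motzkinT'
  split_ifs with h1 h2 h3 h4
  · rw [motzkinT_neg n k h1, motzkinT_gt n _ (by omega)]; ring
  · rw [motzkinT_gt n (2 * (n : ℤ) + 2 - k) (by omega)]; ring
  · rw [h3, motzkinT_gt n _ (by omega)]
    have : 2 * (n : ℤ) + 2 - ((n : ℤ) + 1) = (n : ℤ) + 1 := by ring
    rw [this, motzkinT_gt n _ (by omega)]; ring
  · rw [motzkinT_gt n k (by omega)]; ring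
  · rw [motzkinT_gt n k (by omega), motzkinT_neg n _ (by omega)]; ring

theorem extended_motzkin_recurrence (n : ℕ) (hn : 1 ≤ n) (k : ℤ)
    (hk0 : 0 ≤ k) (hk : k ≤ 2 * (n : ℤ) + 2) :
    motzkinT' n k =
      motzkinT' (n - 1) (k - 2) + motzkinT' (n - 1) (k - 1) + motzkinT' (n - 1) k := by
  obtain ⟨m, rfl⟩ : ∃ m, n = m + 1 := ⟨n - 1, by omega⟩
  simp only [Nat.add_sub_cancel]
  rw [motzkinT'_eq, motzkinT'_eq, motzkinT'_eq, motzkinT'_eq]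
  push_cast at hk ⊢
  rcases le_or_gt k ((m : ℤ) + 1) with hA | hA
  · -- low range: reflected terms all vanish
    rw [motzkinT_gt m (2 * (m : ℤ) + 2 - (k - 2)) (by omega),
        motzkinT_gt m (2 * (m : ℤ) + 2 - (k - 1)) (by omega),
        motzkinT_gt m (2 * (m : ℤ) + 2 - k) (by omega),
        motzkinT_gt (m + 1) (2 * ((m : ℤ) + 1) + 2 - k) (by push_cast; omega),
        motzkinT_rec m k hk0 hA]
    ring
  · rcases eq_or_lt_of_le (by omega : (m : ℤ) + 2 ≤ k) with hB | hB
    · -- k = m + 2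
      rw [← hB]
      rw [motzkinT_gt (m + 1) ((m : ℤ) + 2) (by push_cast; omega),
          motzkinT_gt (m + 1) (2 * ((m : ℤ) + 1) + 2 - ((m : ℤ) + 2)) (by push_cast; omega),
          motzkinT_gt m ((m : ℤ) + 2 - 1) (by omega),
          motzkinT_gt m ((m : ℤ) + 2) (by omega),
          motzkinT_gt m (2 * (m : ℤ) + 2 - ((m : ℤ) + 2 - 2)) (by omega),
          motzkinT_gt m (2 * (m : ℤ) + 2 - ((m : ℤ) + 2 - 1)) (by omega)]
      have e1 : (m : ℤ) + 2 - 2 = (m : ℤ) := by ring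
      have e2 : 2 * (m : ℤ) + 2 - ((m : ℤ) + 2) = (m : ℤ) := by ring
      rw [e1, e2]
      ring
    · -- high range: direct terms vanish
      rw [motzkinT_gt (m + 1) k (by push_cast; omega),
          motzkinT_gt m (k - 2) (by omega),
          motzkinT_gt m (k - 1) (by omega),
          motzkinT_gt m k (by omega)]
      have e1 : 2 * ((m : ℤ) + 1) + 2 - k = (2 * (m : ℤ) + 4 - k) := by ring
      have e2 : 2 * (m : ℤ) + 2 - (k - 2) = (2 * (m : ℤ) + 4 - k) := by ring
      have e3 : 2 * (m : ℤ) + 2 - (k - 1) = (2 * (m : ℤ) + 4 - k) - 1 := by ring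
      have e4 : 2 * (m : ℤ) + 2 - k = (2 * (m : ℤ) + 4 - k) - 2 := by ring
      rw [e1, e2, e3, e4, motzkinT_rec m (2 * (m : ℤ) + 4 - k) (by omega) (by omega)]
      ring
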